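/- Let n, d be positive integers and q, l integers with 0 ≤ q ≤ l and d + l ≤ n. Let C, D ⊆ [n] with |C| = d+q and |D| = d+l. Let η, δ be integers with 2 ≤ η ≤ δ, η ≤ ⌊(n+1)/(d+l+1)⌋, δ ≤ ⌊(n+1)/(d+q+1)⌋, and (d+l+1)·η ≥ (d+q+1)·δ. Set m' = (n+1)(η−1) + n, m'' = (n+1)(δ−1) + n, C̃ = C ∪ {n+1, …, 2n−(d+q)} ⊆ [m''], and D̃ = D ∪ {n+1, …, 2n−(d+l)} ⊆ [m']. If D is not covered by the interval [C, f_δ(C̃) ∩ [n]] (with f_δ computed in the circular representation of [m'']), then [C, f_δ(C̃) ∩ [n]] does not intersect [D, f_η(D̃) ∩ [n]] (with f_η computed in the circular representation of [m']). -/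
import Mathlib


/-- The point of the circular representation of `[N] = {1, …, N}` reached from the
point `x` after `t` clockwise steps. -/
def cpt (N x t : ℕ) : ℕ := (x - 1 + t) % N + 1

/-- The block of `len` clockwise-consecutive points of the circular representation
of `[N]` starting at the point `x`. -/
def cblock (N x len : ℕ) : Finset ℕ := (Finset.range len).image (cpt N x)

/-- Data describing a candidate block structure on the circular representation of a
set `[N]`: the number `p` of blocks, the first (clockwise) element `b i` of the `i`-th
block `B i`, the length `lenB i` of `B i`, and the length `lenG i` of the gap `G i`
following `B i` clockwise (only the indices `i < p` are relevant). -/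
structure CircData where
  p : ℕ
  b : ℕ → ℕ
  lenB : ℕ → ℕ
  lenG : ℕ → ℕ

/-- The `i`-th block `B i` of the data `S` on the circular representation of `[N]`. -/
def CircData.Blk (S : CircData) (N i : ℕ) : Finset ℕ := cblock N (S.b i) (S.lenB i)

/-- The `i`-th gap `G i` of the data `S`, which follows the block `B i` clockwise. -/
def CircData.Gap (S : CircData) (N i : ℕ) : Finset ℕ :=
  cblock N (cpt N (S.b i) (S.lenB i)) (S.lenG i)

/-- `S` describes the block structure `B_1, G_1, B_2, G_2, …, B_p, G_p` of the set `A`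
with respect to the density `δ` on the circular representation of `[N]`. -/
def IsBlockStructure (N : ℕ) (A : Finset ℕ) (δ : ℝ) (S : CircData) : Prop :=
  0 < S.p ∧
  -- each block is nonempty (it contains its first element `b i`)
  (∀ i < S.p, 0 < S.lenB i) ∧
  -- the blocks and gaps are arranged consecutively clockwise, cyclically
  (∀ i, i + 1 < S.p → S.b (i + 1) = cpt N (S.b i) (S.lenB i + S.lenG i)) ∧
  S.b 0 = cpt N (S.b (S.p - 1)) (S.lenB (S.p - 1) + S.lenG (S.p - 1)) ∧
  -- the blocks and gaps form a partition of `[N]`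
  ((Finset.range S.p).biUnion (fun i => S.Blk N i ∪ S.Gap N i) = Finset.Icc 1 N) ∧
  (∀ i < S.p, ∀ j < S.p, i ≠ j →
    Disjoint (S.Blk N i ∪ S.Gap N i) (S.Blk N j ∪ S.Gap N j)) ∧
  (∀ i < S.p, Disjoint (S.Blk N i) (S.Gap N i)) ∧
  -- (i) the first (clockwise) element of each block belongs to `A`
  (∀ i < S.p, S.b i ∈ A) ∧
  -- (ii) the gaps are disjoint from `A`
  (∀ i < S.p, ∀ x ∈ S.Gap N i, x ∉ A) ∧
  -- (iii) `δ·|A ∩ B i| − 1 < |B i| ≤ δ·|A ∩ B i|`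
  (∀ i < S.p, δ * ((A ∩ S.Blk N i).card : ℝ) - 1 < ((S.Blk N i).card : ℝ) ∧
    ((S.Blk N i).card : ℝ) ≤ δ * ((A ∩ S.Blk N i).card : ℝ)) ∧
  -- (iv) every proper initial segment `[b i, y] ⊊ B i` satisfies
  -- `|[b i, y]| + 1 ≤ δ·|[b i, y] ∩ A|`
  (∀ i < S.p, ∀ t, 0 < t → t < S.lenB i →
    ((cblock N (S.b i) t).card : ℝ) + 1 ≤ δ * ((cblock N (S.b i) t ∩ A).card : ℝ))

/-- The union `𝒢_δ(A) = G_1 ∪ ⋯ ∪ G_p` of the gaps of the block structure `S`. -/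
def CircData.gapsUnion (S : CircData) (N : ℕ) : Finset ℕ :=
  (Finset.range S.p).biUnion (S.Gap N)

/-- `f_δ(A) = A ∪ 𝒢_δ(A)`, computed from the block structure `S` of `A` on `[N]`. -/
def fdelta (A : Finset ℕ) (S : CircData) (N : ℕ) : Finset ℕ := A ∪ S.gapsUnion N

open Finset in
lemma cpt_mem_Icc (N x t : ℕ) (hN : 1 ≤ N) : cpt N x t ∈ Finset.Icc 1 N := by
  simp only [cpt, Finset.mem_Icc]
  constructor
  · omega
  · have := Nat.mod_lt (x - 1 + t) (show 0 < N by omega); omega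

lemma cpt_add (N x a b : ℕ) : cpt N (cpt N x a) b = cpt N x (a + b) := by
  simp only [cpt]
  rw [Nat.add_sub_cancel, Nat.mod_add_mod, Nat.add_assoc]

lemma cpt_mod (N x t : ℕ) : cpt N x (t % N) = cpt N x t := by
  simp only [cpt]
  rw [Nat.add_mod_mod]

lemma cpt_id (N x : ℕ) (h1 : 1 ≤ x) (h2 : x ≤ N) : cpt N x 0 = x := by
  simp only [cpt, Nat.add_zero]
  rw [Nat.mod_eq_of_lt (by omega)]; omega

lemma cpt_eq_add (N x t : ℕ) (h1 : 1 ≤ x) (h2 : x + t ≤ N) : cpt N x t = x + t := by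
  simp only [cpt]
  rw [Nat.mod_eq_of_lt (by omega)]; omega

lemma cpt_cancel (N x a b : ℕ) (ha : a < N) (hb : b < N)
    (h : cpt N x a = cpt N x b) : a = b := by
  simp only [cpt] at h
  have h' : (x - 1 + a) % N = (x - 1 + b) % N := by omega
  have := (Nat.ModEq.add_left_cancel' (x - 1) h')
  have : a % N = b % N := this
  rwa [Nat.mod_eq_of_lt ha, Nat.mod_eq_of_lt hb] at this
open Finset

lemma cblock_mono (N x : ℕ) {L1 L2 : ℕ} (h : L1 ≤ L2) : cblock N x L1 ⊆ cblock N x L2 :=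
  Finset.image_subset_image (Finset.range_subset_range.mpr h)

lemma cblock_subset_Icc (N x L : ℕ) (hN : 1 ≤ N) : cblock N x L ⊆ Finset.Icc 1 N := by
  intro a ha
  simp only [cblock, Finset.mem_image] at ha
  obtain ⟨t, _, rfl⟩ := ha
  exact cpt_mem_Icc N x t hN

lemma cblock_card_of_le (N x L : ℕ) (hL : L ≤ N) : (cblock N x L).card = L := by
  rw [cblock, Finset.card_image_of_injOn]
  · exact Finset.card_range L
  · intro a ha b hb hab
    simp only [Finset.coe_range, Set.mem_Iio] at ha hb
    exact cpt_cancel N x a b (lt_of_lt_of_le ha hL) (lt_of_lt_of_le hb hL) hab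

lemma cblock_full (N x : ℕ) (hN : 1 ≤ N) : cblock N x N = Finset.Icc 1 N := by
  apply Finset.eq_of_subset_of_card_le (cblock_subset_Icc N x N hN)
  rw [cblock_card_of_le N x N le_rfl, Nat.card_Icc]; omega

lemma cblock_card_ge (N x L : ℕ) (hN : 1 ≤ N) (hL : N ≤ L) : cblock N x L = Finset.Icc 1 N := by
  apply Finset.eq_of_subset_of_card_le (cblock_subset_Icc N x L hN)
  have h1 : cblock N x N ⊆ cblock N x L := cblock_mono N x hL
  rw [cblock_full N x hN] at h1
  rw [Nat.card_Icc]
  calc N + 1 - 1 = (Finset.Icc 1 N).card := by rw [Nat.card_Icc]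
  _ ≤ _ := Finset.card_le_card h1

lemma cblock_eq_Icc (N y L : ℕ) (hy : 1 ≤ y) (hL : 1 ≤ L) (hyL : y + L - 1 ≤ N) :
    cblock N y L = Finset.Icc y (y + L - 1) := by
  ext a
  simp only [cblock, Finset.mem_image, Finset.mem_range, Finset.mem_Icc]
  constructor
  · rintro ⟨t, ht, rfl⟩
    rw [cpt_eq_add N y t hy (by omega)]
    omega
  · rintro ⟨h1, h2⟩
    exact ⟨a - y, by omega, by rw [cpt_eq_add N y (a - y) hy (by omega)]; omega⟩

lemma cblock_add (N y L1 L2 : ℕ) :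
    cblock N y (L1 + L2) = cblock N y L1 ∪ cblock N (cpt N y L1) L2 := by
  ext a
  simp only [cblock, Finset.mem_union, Finset.mem_image, Finset.mem_range]
  constructor
  · rintro ⟨t, ht, rfl⟩
    rcases lt_or_ge t L1 with h | h
    · exact Or.inl ⟨t, h, rfl⟩
    · exact Or.inr ⟨t - L1, by omega, by rw [cpt_add]; congr 1; omega⟩
  · rintro (⟨t, ht, rfl⟩ | ⟨t, ht, rfl⟩)
    · exact ⟨t, by omega, rfl⟩
    · exact ⟨L1 + t, by omega, by rw [cpt_add]⟩

lemma cblock_succ (N y L : ℕ) : cblock N y (L + 1) = insert (cpt N y L) (cblock N y L) := by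
  rw [cblock, Finset.range_add_one, Finset.image_insert]; rfl

lemma cpt_not_mem_cblock (N y L : ℕ) (hL : L < N) : cpt N y L ∉ cblock N y L := by
  intro h
  simp only [cblock, Finset.mem_image, Finset.mem_range] at h
  obtain ⟨t, ht, het⟩ := h
  have := cpt_cancel N y t L (by omega) hL het
  omega
/-- Central certificate lemma: any circular interval ending at a gap point `u`
has `ρ`-density below 1 strictly. -/
lemma cert_main {N : ℕ} {A : Finset ℕ} {ρ : ℕ} {S : CircData}
    (hN : 1 ≤ N) (hA : A ⊆ Finset.Icc 1 N) (hsm : ρ * A.card + 1 ≤ N)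
    (hS : IsBlockStructure N A (ρ : ℝ) S) {u : ℕ} (hu : u ∈ S.gapsUnion N)
    {y L : ℕ} (hy1 : 1 ≤ y) (hy2 : y ≤ N) (hL1 : 1 ≤ L) (hLN : L ≤ N)
    (hend : cpt N y (L - 1) = u) :
    ρ * ((cblock N y L) ∩ A).card + 1 ≤ L := by
  obtain ⟨hp, hlenBpos, hconsec, hwrap, hpart, hdisj, hBGdisj, hbA, hGA, hiii, hiv⟩ := hS
  set b0 := S.b 0 with hb0
  -- the running count of elements of A among the first j cells from b0
  set cnt : ℕ → ℕ := fun j => ((Finset.range j).filter (fun k => cpt N b0 k ∈ A)).card with hcnt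
  have hcnt_succ : ∀ j, cnt (j+1) = cnt j + (if cpt N b0 j ∈ A then 1 else 0) := by
    intro j
    simp only [hcnt, Finset.range_add_one, Finset.filter_insert]
    split
    · rw [Finset.card_insert_of_notMem (by simp)]
    · simp
  have hcnt_block : ∀ q L', L' ≤ N → cnt (q + L') = cnt q + (cblock N (cpt N b0 q) L' ∩ A).card := by
    intro q L' hL'
    induction L' with
    | zero => simp [cblock]
    | succ L'' ih =>
      rw [← Nat.add_assoc, hcnt_succ (q + L''), ih (by omega), cblock_succ]
      rw [cpt_add]
      by_cases hmem : cpt N b0 (q + L'') ∈ A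
      · rw [if_pos hmem, Finset.insert_inter_of_mem hmem,
          Finset.card_insert_of_notMem (fun hc => cpt_not_mem_cblock N (cpt N b0 q) L''
            (by omega) (by rw [cpt_add]; exact (Finset.mem_inter.mp hc).1))]
        omega
      · rw [if_neg hmem, Finset.insert_inter_of_notMem hmem]
        omega
  have hcnt_N : cnt N = A.card := by
    have := hcnt_block 0 N le_rfl
    simp only [Nat.zero_add] at this
    rw [this]
    have h0 : cnt 0 = 0 := by rw [hcnt]; simp
    rw [h0, cblock_full N _ hN, Finset.inter_eq_right.mpr hA]
    omega
  have hcnt_per : ∀ j, cnt (N + j) = cnt N + cnt j := by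
    intro j
    induction j with
    | zero =>
      have h0 : cnt 0 = 0 := by rw [hcnt]; simp
      simp only [Nat.add_zero, h0]
    | succ j' ih =>
      have hc : cpt N b0 (N + j') = cpt N b0 j' := by
        rw [← cpt_mod N b0 (N + j'), Nat.add_mod_left, cpt_mod]
      rw [← Nat.add_assoc, hcnt_succ, ih, hcnt_succ, hc]
      omega
  -- offsets
  set offB : ℕ → ℕ := fun i => ∑ j ∈ Finset.range i, (S.lenB j + S.lenG j) with hoffB
  set Goff : ℕ → ℕ := fun i => ∑ j ∈ Finset.range i, S.lenG j with hGoff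
  have hoffB_succ : ∀ i, offB (i+1) = offB i + (S.lenB i + S.lenG i) := by
    intro i; simp [hoffB, Finset.sum_range_succ]
  have hGoff_succ : ∀ i, Goff (i+1) = Goff i + S.lenG i := by
    intro i; simp [hGoff, Finset.sum_range_succ]
  have hGoff_mono : ∀ ⦃i i'⦄, i ≤ i' → Goff i ≤ Goff i' := by
    intro i i' h
    exact Finset.sum_le_sum_of_subset (Finset.range_subset_range.mpr h)
  have hoffB_mono : ∀ ⦃i i'⦄, i ≤ i' → offB i ≤ offB i' := by
    intro i i' h
    exact Finset.sum_le_sum_of_subset (Finset.range_subset_range.mpr h)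
  have hb : ∀ i, i < S.p → S.b i = cpt N b0 (offB i) := by
    intro i
    induction i with
    | zero =>
      intro _
      have hmem := hA (hbA 0 hp)
      simp only [Finset.mem_Icc] at hmem
      have : offB 0 = 0 := by simp [hoffB]
      rw [this, cpt_id N _ hmem.1 hmem.2]
    | succ i' ih =>
      intro hip
      rw [hconsec i' hip, ih (by omega), cpt_add, hoffB_succ]
  have hlenB_le : ∀ i, i < S.p → S.lenB i ≤ N := by
    intro i hi
    by_contra hcon
    have h4 := hiv i hi N hN (by omega)
    rw [cblock_full N _ hN, Finset.inter_comm, Finset.inter_eq_left.mpr hA] at h4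
    have hcc : (Finset.Icc 1 N).card = N := by rw [Nat.card_Icc]; omega
    rw [hcc] at h4
    have hNge : N + 1 ≤ ρ * A.card := by exact_mod_cast h4
    omega
  have hNsum : N = ∑ i ∈ Finset.range S.p, ((S.Blk N i).card + (S.Gap N i).card) := by
    have h1 : (Finset.Icc 1 N).card = N := by rw [Nat.card_Icc]; omega
    have h2 : ((Finset.range S.p).biUnion (fun i => S.Blk N i ∪ S.Gap N i)).card
        = ∑ i ∈ Finset.range S.p, (S.Blk N i ∪ S.Gap N i).card := by
      apply Finset.card_biUnion
      intro i hi j hj hij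
      exact hdisj i (Finset.mem_range.mp hi) j (Finset.mem_range.mp hj) hij
    rw [hpart, h1] at h2
    refine h2.trans (Finset.sum_congr rfl ?_)
    intro i hi
    rw [Finset.card_union_of_disjoint (hBGdisj i (Finset.mem_range.mp hi))]
  have hterm_le : ∀ i, i < S.p → (S.Blk N i).card + (S.Gap N i).card ≤ N := by
    intro i hi
    have hsl : (S.Blk N i).card + (S.Gap N i).card
        ≤ ∑ i ∈ Finset.range S.p, ((S.Blk N i).card + (S.Gap N i).card) :=
      Finset.single_le_sum (f := fun i => (S.Blk N i).card + (S.Gap N i).card)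
        (fun _ _ => Nat.zero_le _) (Finset.mem_range.mpr hi)
    omega
  have hlenG_le : ∀ i, i < S.p → S.lenG i ≤ N := by
    intro i hi
    by_contra hcon
    have h1 : (S.Blk N i).card = S.lenB i := cblock_card_of_le N _ _ (hlenB_le i hi)
    have h2 : (S.Gap N i).card = N := by
      rw [CircData.Gap, cblock_card_ge N _ _ hN (by omega), Nat.card_Icc]; omega
    have := hterm_le i hi
    have := hlenBpos i hi
    omega
  have hsum : offB S.p = N := by
    rw [hNsum, hoffB]
    apply Finset.sum_congr rfl
    intro i hi
    have hi' := Finset.mem_range.mp hi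
    have hB : (S.Blk N i).card = S.lenB i := by
      rw [CircData.Blk]; exact cblock_card_of_le N _ _ (hlenB_le i hi')
    have hG : (S.Gap N i).card = S.lenG i := by
      rw [CircData.Gap]; exact cblock_card_of_le N _ _ (hlenG_le i hi')
    omega
  -- block total count equality
  have hblkcnt : ∀ i, i < S.p → ρ * (cblock N (S.b i) (S.lenB i) ∩ A).card = S.lenB i := by
    intro i hi
    obtain ⟨h1, h2⟩ := hiii i hi
    have hc : (S.Blk N i).card = S.lenB i := cblock_card_of_le N _ _ (hlenB_le i hi)
    rw [hc] at h1 h2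
    rw [Finset.inter_comm] at h1 h2
    have ha : (S.lenB i : ℝ) ≤ ρ * (cblock N (S.b i) (S.lenB i) ∩ A).card := h2
    have hb' : (ρ : ℝ) * (cblock N (S.b i) (S.lenB i) ∩ A).card < S.lenB i + 1 := by
      unfold CircData.Blk at h1
      linarith
    have ha' : S.lenB i ≤ ρ * (cblock N (S.b i) (S.lenB i) ∩ A).card := by exact_mod_cast ha
    have hb'' : ρ * (cblock N (S.b i) (S.lenB i) ∩ A).card < S.lenB i + 1 := by exact_mod_cast hb'
    omega
  have hprefix : ∀ i, i < S.p → ∀ j', 0 < j' → j' < S.lenB i →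
      j' + 1 ≤ ρ * (cblock N (S.b i) j' ∩ A).card := by
    intro i hi j' h0 hlt
    have h4 := hiv i hi j' h0 hlt
    have hc : (cblock N (S.b i) j').card = j' :=
      cblock_card_of_le N _ _ (le_trans (le_of_lt hlt) (hlenB_le i hi))
    rw [hc] at h4
    exact_mod_cast h4
  -- gap cells contain no A elements
  have hgapconst : ∀ i, i < S.p → ∀ j'', j'' ≤ S.lenG i →
      cnt (offB i + S.lenB i + j'') = cnt (offB i + S.lenB i) := by
    intro i hi j'' hj
    have hcb := hcnt_block (offB i + S.lenB i) j'' (le_trans hj (hlenG_le i hi))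
    have hgs : cpt N b0 (offB i + S.lenB i) = cpt N (S.b i) (S.lenB i) := by
      rw [hb i hi, cpt_add]
    rw [hgs] at hcb
    have hz : (cblock N (cpt N (S.b i) (S.lenB i)) j'' ∩ A).card = 0 := by
      rw [Finset.card_eq_zero, Finset.eq_empty_iff_forall_notMem]
      intro x hx
      obtain ⟨hx1, hx2⟩ := Finset.mem_inter.mp hx
      exact hGA i hi x (cblock_mono N _ hj hx1) hx2
    rw [hz] at hcb
    omega
  -- potential equality at block boundaries
  have hE : ∀ i, i ≤ S.p → offB i = ρ * cnt (offB i) + Goff i := by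
    intro i
    induction i with
    | zero => intro _; simp [hoffB, hGoff, hcnt]
    | succ i' ih =>
      intro hip
      have hi' : i' < S.p := by omega
      have hcb := hcnt_block (offB i') (S.lenB i') (hlenB_le i' hi')
      rw [← hb i' hi'] at hcb
      have hmul : ρ * cnt (offB i' + S.lenB i')
          = ρ * cnt (offB i') + ρ * (cblock N (S.b i') (S.lenB i') ∩ A).card := by
        rw [hcb, Nat.mul_add]
      have hgc := hgapconst i' hi' (S.lenG i') le_rfl
      have hoff : offB (i'+1) = offB i' + S.lenB i' + S.lenG i' := by
        rw [hoffB_succ]; omega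
      have hcnt1 : cnt (offB (i'+1)) = cnt (offB i' + S.lenB i') := by
        rw [hoff]; exact hgc
      have hbc := hblkcnt i' hi'
      have hGs := hGoff_succ i'
      have hih := ih (by omega)
      rw [hcnt1, hoff, hGs]
      set X1 := ρ * cnt (offB i' + S.lenB i') with hX1
      set X2 := ρ * cnt (offB i') with hX2
      set X3 := ρ * (cblock N (S.b i') (S.lenB i') ∩ A).card with hX3
      omega
  have hEnd : ∀ i, i < S.p → offB i + S.lenB i = ρ * cnt (offB i + S.lenB i) + Goff i := by
    intro i hi
    have hcb := hcnt_block (offB i) (S.lenB i) (hlenB_le i hi)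
    rw [← hb i hi] at hcb
    have hmul : ρ * cnt (offB i + S.lenB i)
        = ρ * cnt (offB i) + ρ * (cblock N (S.b i) (S.lenB i) ∩ A).card := by
      rw [hcb, Nat.mul_add]
    have hbc := hblkcnt i hi
    have hih := hE i (le_of_lt hi)
    set X1 := ρ * cnt (offB i + S.lenB i) with hX1
    set X2 := ρ * cnt (offB i) with hX2
    set X3 := ρ * (cblock N (S.b i) (S.lenB i) ∩ A).card with hX3
    omega
  have hBlockLe : ∀ i, i < S.p → ∀ j', j' ≤ S.lenB i →
      offB i + j' ≤ ρ * cnt (offB i + j') + Goff i := by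
    intro i hi j' hj
    rcases Nat.eq_or_lt_of_le hj with heq | hlt
    · subst heq; exact le_of_eq (hEnd i hi)
    rcases Nat.eq_zero_or_pos j' with h0 | h0
    · subst h0; simp only [Nat.add_zero]; exact le_of_eq (hE i (le_of_lt hi))
    have hcb := hcnt_block (offB i) j' (le_trans (le_of_lt hlt) (hlenB_le i hi))
    rw [← hb i hi] at hcb
    have hpre := hprefix i hi j' h0 hlt
    have hmul : ρ * cnt (offB i + j')
        = ρ * cnt (offB i) + ρ * (cblock N (S.b i) j' ∩ A).card := by
      rw [hcb, Nat.mul_add]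
    have hih := hE i (le_of_lt hi)
    set X1 := ρ * cnt (offB i + j') with hX1
    set X2 := ρ * cnt (offB i) with hX2
    set X3 := ρ * (cblock N (S.b i) j' ∩ A).card with hX3
    omega
  have hM : ∀ i, i ≤ S.p → ∀ q, q ≤ offB i → q ≤ ρ * cnt q + Goff i := by
    intro i
    induction i with
    | zero =>
      intro _ q hq
      have : offB 0 = 0 := by simp [hoffB]
      omega
    | succ i' ih =>
      intro hip q hq
      have hi' : i' < S.p := by omega
      rcases le_or_gt q (offB i') with hqle | hqgt
      · exact le_trans (ih (by omega) q hqle) (by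
          have := hGoff_mono (show i' ≤ i' + 1 by omega); omega)
      rcases le_or_gt q (offB i' + S.lenB i') with hqb | hqg
      · have := hBlockLe i' hi' (q - offB i') (by omega)
        have hGm := hGoff_mono (show i' ≤ i' + 1 by omega)
        have hqe : offB i' + (q - offB i') = q := by omega
        rw [hqe] at this
        omega
      · have hqlt : q ≤ offB i' + S.lenB i' + S.lenG i' := by
          rw [hoffB_succ] at hq; omega
        have hgc := hgapconst i' hi' (q - offB i' - S.lenB i') (by omega)
        have hqe : offB i' + S.lenB i' + (q - offB i' - S.lenB i') = q := by omega
        rw [hqe] at hgc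
        have hend' := hEnd i' hi'
        rw [hGoff_succ, hgc]
        omega
  -- gap point coordinates
  rw [CircData.gapsUnion, Finset.mem_biUnion] at hu
  obtain ⟨i, hi, hugap⟩ := hu
  have hi' : i < S.p := Finset.mem_range.mp hi
  rw [CircData.Gap, cblock, Finset.mem_image] at hugap
  obtain ⟨ju, hju, huval⟩ := hugap
  have hju' : ju < S.lenG i := Finset.mem_range.mp hju
  set P := offB i + S.lenB i + ju with hPdef
  have huP : u = cpt N b0 P := by
    rw [← huval, hb i hi', cpt_add, cpt_add]
    congr 1
    omega
  have hPlt : P < N := by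
    have h1 : P < offB (i + 1) := by rw [hoffB_succ]; omega
    have h2 : offB (i+1) ≤ offB S.p := hoffB_mono (by omega)
    omega
  have hKEq : P + 1 = ρ * cnt (P + 1) + Goff i + (ju + 1) := by
    have hgc := hgapconst i hi' (ju + 1) (by omega)
    have : offB i + S.lenB i + (ju + 1) = P + 1 := by omega
    rw [this] at hgc
    rw [hgc, ← hEnd i hi']
    omega
  have hMq : ∀ q', q' ≤ P → q' ≤ ρ * cnt q' + Goff i + ju := by
    intro q' hq'
    rcases le_or_gt q' (offB i + S.lenB i) with hqb | hqg
    · rcases le_or_gt q' (offB i) with h1 | h1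
      · have := hM i (le_of_lt hi') q' h1; omega
      · have := hBlockLe i hi' (q' - offB i) (by omega)
        have hqe : offB i + (q' - offB i) = q' := by omega
        rw [hqe] at this; omega
    · have hgc := hgapconst i hi' (q' - offB i - S.lenB i) (by omega)
      have hqe : offB i + S.lenB i + (q' - offB i - S.lenB i) = q' := by omega
      rw [hqe] at hgc
      have hend' := hEnd i hi'
      rw [hgc]
      omega
  -- locate y
  have hyblk : y ∈ cblock N b0 N := by
    rw [cblock_full N _ hN, Finset.mem_Icc]; exact ⟨hy1, hy2⟩
  rw [cblock, Finset.mem_image] at hyblk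
  obtain ⟨q, hq, hyq⟩ := hyblk
  have hqN : q < N := Finset.mem_range.mp hq
  have huu : cpt N b0 (q + (L - 1)) = cpt N b0 P := by
    rw [← cpt_add, hyq, hend]
    exact huP
  have hmodeq : (q + (L - 1)) % N = P := by
    have h1 : cpt N b0 ((q + (L-1)) % N) = cpt N b0 (P % N) := by
      rw [cpt_mod, cpt_mod, huu]
    have := cpt_cancel N b0 _ _ (Nat.mod_lt _ (by omega)) (Nat.mod_lt _ (by omega)) h1
    rw [Nat.mod_eq_of_lt hPlt] at this
    exact this
  have hsplit : q + (L - 1) = P ∨ q + (L - 1) = N + P := by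
    rcases lt_or_ge (q + (L - 1)) N with h | h
    · left; rwa [Nat.mod_eq_of_lt h] at hmodeq
    · right
      have h2 : q + (L - 1) - N < N := by omega
      rw [Nat.mod_eq_sub_mod h, Nat.mod_eq_of_lt h2] at hmodeq
      omega
  have hcb := hcnt_block q L hLN
  rw [hyq] at hcb
  set crd := (cblock N y L ∩ A).card with hcrd
  have hmul2 : ρ * cnt (q + L) = ρ * cnt q + ρ * crd := by rw [hcb, Nat.mul_add]
  rcases hsplit with hk | hk
  · -- no wrap : q + L = P + 1
    have hqL : q + L = P + 1 := by omega
    have hM1 := hMq q (by omega)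
    rw [hqL] at hmul2
    -- atoms
    have hfin : ρ * crd + 1 ≤ L := by
      have e1 := hKEq
      set X1 := ρ * cnt (P+1) with hX1
      set X2 := ρ * cnt q with hX2
      set X3 := ρ * crd with hX3
      omega
    exact hfin
  · -- wrap : q + L = N + P + 1
    have hqL : q + L = N + (P + 1) := by omega
    have hper := hcnt_per (P + 1)
    rw [hqL, hper, hcnt_N] at hmul2
    have hMN := hM S.p le_rfl q (by omega)
    have hEN : N = ρ * A.card + Goff S.p := by
      have := hE S.p le_rfl
      rw [hsum, hcnt_N] at this
      exact this
    have hmul3 : ρ * (A.card + cnt (P+1)) = ρ * A.card + ρ * cnt (P + 1) := by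
      rw [Nat.mul_add]
    rw [hmul3] at hmul2
    have e1 := hKEq
    set X1 := ρ * cnt (P+1) with hX1
    set X2 := ρ * cnt q with hX2
    set X3 := ρ * crd with hX3
    set X4 := ρ * A.card with hX4
    omega
lemma gapsUnion_subset_Icc {N : ℕ} {S : CircData} (hN : 1 ≤ N) :
    S.gapsUnion N ⊆ Finset.Icc 1 N := by
  intro x hx
  rw [CircData.gapsUnion, Finset.mem_biUnion] at hx
  obtain ⟨i, _, hxi⟩ := hx
  exact cblock_subset_Icc N _ _ hN hxi

/-- Left certificate: intervals inside `[1, n]` ending at a gap point `u`. -/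
lemma certL_gen {N n ρ : ℕ} {A : Finset ℕ} {S : CircData}
    (hnN : n < N) (hA : A ⊆ Finset.Icc 1 N) (hsm : ρ * A.card + 1 ≤ N)
    (hS : IsBlockStructure N A (ρ : ℝ) S) {u : ℕ} (hu : u ∈ S.gapsUnion N)
    (hun : u ≤ n) {z : ℕ} (hz : z < u) :
    ρ * (A ∩ Finset.Icc (z + 1) u).card + 1 + z ≤ u := by
  have hN : 1 ≤ N := by omega
  have hu1 : 1 ≤ u := by
    have := gapsUnion_subset_Icc hN hu
    exact (Finset.mem_Icc.mp this).1
  have hcb : cblock N (z + 1) (u - z) = Finset.Icc (z + 1) u := by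
    rw [cblock_eq_Icc N (z+1) (u-z) (by omega) (by omega) (by omega)]
    congr 1
    omega
  have hend : cpt N (z + 1) (u - z - 1) = u := by
    rw [cpt_eq_add N (z+1) (u - z - 1) (by omega) (by omega)]
    omega
  have := cert_main hN hA hsm hS hu (y := z + 1) (L := u - z)
    (by omega) (by omega) (by omega) (by omega) hend
  rw [hcb, Finset.inter_comm] at this
  omega

/-- Right (wrap-around) certificate for the augmented sets:
if `N + 1 = ρ * (A.card + 1)` then `z - u ≤ ρ(w+1) - 2`. -/
lemma certR_gen {N n ρ : ℕ} {A : Finset ℕ} {S : CircData}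
    (hnN : n < N) (hA : A ⊆ Finset.Icc 1 N) (hsm : ρ * A.card + 1 ≤ N)
    (hNval : N + 1 = ρ * (A.card + 1)) {u : ℕ}
    (hS : IsBlockStructure N A (ρ : ℝ) S) (hu : u ∈ S.gapsUnion N)
    (hun : u ≤ n) {z : ℕ} (hz1 : u ≤ z) (hzn : z ≤ n) :
    z + 2 ≤ u + ρ * ((A ∩ Finset.Icc (u + 1) z).card + 1) := by
  have hN : 1 ≤ N := by omega
  have hu1 : 1 ≤ u := by
    have := gapsUnion_subset_Icc hN hu
    exact (Finset.mem_Icc.mp this).1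
  set L := N - z + u with hL
  have hend : cpt N (z + 1) (L - 1) = u := by
    simp only [cpt, hL]
    have h1 : z + 1 - 1 + (N - z + u - 1) = N + (u - 1) := by omega
    rw [h1, Nat.add_mod_left, Nat.mod_eq_of_lt (by omega)]
    omega
  have hsplit : cblock N (z + 1) L = Finset.Icc (z + 1) N ∪ Finset.Icc 1 u := by
    have hLL : L = (N - z) + u := by omega
    rw [hLL, cblock_add]
    congr 1
    · rw [cblock_eq_Icc N (z+1) (N-z) (by omega) (by omega) (by omega)]
      congr 1
      omega
    · have hc1 : cpt N (z + 1) (N - z) = 1 := by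
        simp only [cpt]
        have : z + 1 - 1 + (N - z) = N := by omega
        rw [this, Nat.mod_self]
      rw [hc1, cblock_eq_Icc N 1 u (by omega) (by omega) (by omega)]
      congr 1
      omega
  have hints : cblock N (z + 1) L ∩ A = A \ (A ∩ Finset.Icc (u + 1) z) := by
    rw [hsplit]
    ext a
    simp only [Finset.mem_inter, Finset.mem_union, Finset.mem_Icc, Finset.mem_sdiff]
    constructor
    · rintro ⟨h1 | h1, h2⟩
      · exact ⟨h2, fun hc => by omega⟩
      · exact ⟨h2, fun hc => by omega⟩
    · rintro ⟨h1, h2⟩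
      refine ⟨?_, h1⟩
      have hmem := hA h1
      rw [Finset.mem_Icc] at hmem
      by_cases hle : a ≤ n
      · rcases le_or_gt a u with h | h
        · right; omega
        · left
          constructor
          · by_contra hc
            exact h2 ⟨h1, by omega, by omega⟩
          · omega
      · omega
  have hcard : (cblock N (z + 1) L ∩ A).card = A.card - (A ∩ Finset.Icc (u + 1) z).card := by
    rw [hints, Finset.card_sdiff_of_subset (Finset.inter_subset_left)]
  have hwle : (A ∩ Finset.Icc (u + 1) z).card ≤ A.card :=
    Finset.card_le_card Finset.inter_subset_left
  have hmain := cert_main hN hA hsm hS hu (y := z + 1) (L := L)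
    (by omega) (by omega) (by omega) (by omega) hend
  rw [hcard] at hmain
  have hmulsub : ρ * (A.card - (A ∩ Finset.Icc (u + 1) z).card)
      = ρ * A.card - ρ * (A ∩ Finset.Icc (u + 1) z).card := by
    rw [Nat.mul_sub]
  rw [hmulsub] at hmain
  have hmm : ρ * (A ∩ Finset.Icc (u + 1) z).card ≤ ρ * A.card :=
    Nat.mul_le_mul_left ρ hwle
  have hexp : ρ * ((A ∩ Finset.Icc (u + 1) z).card + 1)
      = ρ * (A ∩ Finset.Icc (u + 1) z).card + ρ := by rw [Nat.mul_add, Nat.mul_one]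
  have hNv2 : N + 1 = ρ * A.card + ρ := by rw [hNval, Nat.mul_add, Nat.mul_one]
  rw [hexp]
  set W := ρ * (A ∩ Finset.Icc (u + 1) z).card with hW
  set V := ρ * A.card with hV
  omega
/-- Chain lemma: iterating the left certificates over the points of `Cd` above `x1`. -/
lemma chainA {η x1 : ℕ} {D Cd : Finset ℕ} (hx1 : 1 ≤ x1) (hx1Cd : x1 ∉ Cd)
    (hcert : ∀ r ∈ Cd, ∀ z, z < r → η * (D ∩ Finset.Icc (z + 1) r).card + 1 + z ≤ r) :
    ∀ r, r ∈ Cd → x1 < r →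
      η * (D ∩ Finset.Icc x1 r).card + (Cd ∩ Finset.Icc x1 r).card + x1 ≤ r + 1 := by
  intro r
  induction r using Nat.strong_induction_on with
  | _ r ih =>
    intro hr hx1r
    by_cases hne : (Cd ∩ Finset.Ico x1 r).Nonempty
    · set r' := (Cd ∩ Finset.Ico x1 r).max' hne with hr'
      have hr'mem := (Cd ∩ Finset.Ico x1 r).max'_mem hne
      rw [Finset.mem_inter, Finset.mem_Ico] at hr'mem
      obtain ⟨hr'Cd, hr'1, hr'2⟩ := hr'mem
      have hr'x1 : x1 < r' := lt_of_le_of_ne hr'1 (fun h => hx1Cd (h ▸ hr'Cd))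
      have hih := ih r' hr'2 hr'Cd hr'x1
      have hc := hcert r hr r' hr'2
      -- counting splits
      have hDsplit : (D ∩ Finset.Icc x1 r).card
          = (D ∩ Finset.Icc x1 r').card + (D ∩ Finset.Icc (r' + 1) r).card := by
        rw [← Finset.card_union_of_disjoint, ← Finset.inter_union_distrib_left]
        · congr 2
          ext a
          simp only [Finset.mem_union, Finset.mem_Icc]
          omega
        · apply Finset.disjoint_left.mpr
          intro a ha hb
          rw [Finset.mem_inter, Finset.mem_Icc] at ha hb
          omega
      have hCdsplit : (Cd ∩ Finset.Icc x1 r).card = (Cd ∩ Finset.Icc x1 r').card + 1 := by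
        have : Cd ∩ Finset.Icc x1 r = insert r (Cd ∩ Finset.Icc x1 r') := by
          ext a
          simp only [Finset.mem_insert, Finset.mem_inter, Finset.mem_Icc]
          constructor
          · rintro ⟨h1, h2, h3⟩
            rcases Nat.eq_or_lt_of_le h3 with h | h
            · exact Or.inl h
            · right
              refine ⟨h1, h2, ?_⟩
              by_contra hc2
              have : a ∈ Cd ∩ Finset.Ico x1 r := by
                rw [Finset.mem_inter, Finset.mem_Ico]
                exact ⟨h1, h2, h⟩
              have := Finset.le_max' _ a this
              omega
          · rintro (rfl | ⟨h1, h2, h3⟩)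
            · exact ⟨hr, by omega, le_rfl⟩
            · exact ⟨h1, h2, by omega⟩
        rw [this, Finset.card_insert_of_notMem]
        intro hc2
        rw [Finset.mem_inter, Finset.mem_Icc] at hc2
        omega
      rw [hDsplit, hCdsplit, Nat.mul_add]
      set Y1 := η * (D ∩ Finset.Icc x1 r').card with hY1
      set Y2 := η * (D ∩ Finset.Icc (r' + 1) r).card with hY2
      omega
    · -- no Cd point in [x1, r): base case
      have hc := hcert r hr (x1 - 1) (by omega)
      have hx1e : x1 - 1 + 1 = x1 := by omega
      rw [hx1e] at hc
      have hCd1 : Cd ∩ Finset.Icc x1 r = {r} := by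
        ext a
        simp only [Finset.mem_inter, Finset.mem_Icc, Finset.mem_singleton]
        constructor
        · rintro ⟨h1, h2, h3⟩
          rcases Nat.eq_or_lt_of_le h3 with h | h
          · exact h
          · exfalso
            apply hne
            exact ⟨a, Finset.mem_inter.mpr ⟨h1, Finset.mem_Ico.mpr ⟨h2, h⟩⟩⟩
        · rintro rfl
          exact ⟨hr, by omega, le_rfl⟩
      rw [hCd1, Finset.card_singleton]
      omega


/-- Proposition 3.5 of the paper. Let `C, D ⊆ [n]` with
`|C| = d + q`, `|D| = d + l`, `0 ≤ q ≤ l`, `d + l ≤ n`. Let `η, δ` be integers with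
`2 ≤ η ≤ δ`, `η ≤ ⌊(n+1)/(d+l+1)⌋`, `δ ≤ ⌊(n+1)/(d+q+1)⌋` and
`(d+l+1)η ≥ (d+q+1)δ`. Set `m' = (n+1)(η−1) + n`, `m'' = (n+1)(δ−1) + n`,
`C̃ = C ∪ {n+1, …, 2n−(d+q)} ⊆ [m'']` and `D̃ = D ∪ {n+1, …, 2n−(d+l)} ⊆ [m']`.
If `D` is not covered by `[C, f_δ(C̃) ∩ [n]]`, then `[C, f_δ(C̃) ∩ [n]]` does not
intersect `[D, f_η(D̃) ∩ [n]]`. -/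
theorem trimmed_intervals_two_densities (n d q l : ℕ) (hn : 1 ≤ n) (hd : 1 ≤ d)
    (hql : q ≤ l) (hdl : d + l ≤ n)
    (C D : Finset ℕ) (hC : C ⊆ Finset.Icc 1 n) (hD : D ⊆ Finset.Icc 1 n)
    (hCcard : C.card = d + q) (hDcard : D.card = d + l)
    (η δ : ℕ) (hη2 : 2 ≤ η) (hηδ : η ≤ δ)
    (hη : η ≤ (n + 1) / (d + l + 1)) (hδ : δ ≤ (n + 1) / (d + q + 1))
    (hcomp : (d + q + 1) * δ ≤ (d + l + 1) * η)
    (m' m'' : ℕ) (hm' : m' = (n + 1) * (η - 1) + n) (hm'' : m'' = (n + 1) * (δ - 1) + n)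
    (S T : CircData)
    (hS : IsBlockStructure m'' (C ∪ Finset.Icc (n + 1) (2 * n - (d + q))) (δ : ℝ) S)
    (hT : IsBlockStructure m' (D ∪ Finset.Icc (n + 1) (2 * n - (d + l))) (η : ℝ) T)
    (hnotcov : ¬(C ⊆ D ∧
      D ⊆ fdelta (C ∪ Finset.Icc (n + 1) (2 * n - (d + q))) S m'' ∩ Finset.Icc 1 n)) :
    ∀ X : Finset ℕ,
      ¬(C ⊆ X ∧
        X ⊆ fdelta (C ∪ Finset.Icc (n + 1) (2 * n - (d + q))) S m'' ∩ Finset.Icc 1 n ∧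
        D ⊆ X ∧
        X ⊆ fdelta (D ∪ Finset.Icc (n + 1) (2 * n - (d + l))) T m' ∩ Finset.Icc 1 n) := by
  intro X hX
  obtain ⟨hCX, hXFC, hDX, hXFD⟩ := hX
  set AC := C ∪ Finset.Icc (n + 1) (2 * n - (d + q)) with hACdef
  set AD := D ∪ Finset.Icc (n + 1) (2 * n - (d + l)) with hADdef
  have hDF : D ⊆ fdelta AC S m'' ∩ Finset.Icc 1 n := hDX.trans hXFC
  have hCF : C ⊆ fdelta AD T m' ∩ Finset.Icc 1 n := hCX.trans hXFD
  have hnCD : ¬ C ⊆ D := fun h => hnotcov ⟨h, hDF⟩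
  have hδ2 : 2 ≤ δ := le_trans hη2 hηδ
  -- basic numbers
  have hm'val : m' + 1 = η * (n + 1) := by
    obtain ⟨e, rfl⟩ : ∃ e, η = e + 2 := ⟨η - 2, by omega⟩
    rw [hm']
    have h2 : e + 2 - 1 = e + 1 := by omega
    rw [h2]; ring
  have hm''val : m'' + 1 = δ * (n + 1) := by
    obtain ⟨e, rfl⟩ : ∃ e, δ = e + 2 := ⟨δ - 2, by omega⟩
    rw [hm'']
    have h2 : e + 2 - 1 = e + 1 := by omega
    rw [h2]; ring
  have hηn : η * (n + 1) = η * n + η := by ring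
  have hδn : δ * (n + 1) = δ * n + δ := by ring
  have hm'N : 2 * n + 1 ≤ m' := by
    have h1 : η * (n + 1) ≥ 2 * (n + 1) := Nat.mul_le_mul_right (n + 1) hη2
    omega
  have hm''N : 2 * n + 1 ≤ m'' := by
    have h1 : δ * (n + 1) ≥ 2 * (n + 1) := Nat.mul_le_mul_right (n + 1) hδ2
    omega
  -- cardinalities of the augmented sets
  have hDICdisj : Disjoint D (Finset.Icc (n + 1) (2 * n - (d + l))) := by
    rw [Finset.disjoint_left]
    intro a ha hb
    have h1 := hD ha
    rw [Finset.mem_Icc] at h1 hb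
    omega
  have hCICdisj : Disjoint C (Finset.Icc (n + 1) (2 * n - (d + q))) := by
    rw [Finset.disjoint_left]
    intro a ha hb
    have h1 := hC ha
    rw [Finset.mem_Icc] at h1 hb
    omega
  have hADcard : AD.card = n := by
    rw [hADdef, Finset.card_union_of_disjoint hDICdisj, hDcard, Nat.card_Icc]
    omega
  have hACcard : AC.card = n := by
    rw [hACdef, Finset.card_union_of_disjoint hCICdisj, hCcard, Nat.card_Icc]
    omega
  have hADsub : AD ⊆ Finset.Icc 1 m' := by
    rw [hADdef]
    apply Finset.union_subset
    · exact hD.trans (Finset.Icc_subset_Icc_right (by omega))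
    · exact Finset.Icc_subset_Icc (by omega) (by omega)
  have hACsub : AC ⊆ Finset.Icc 1 m'' := by
    rw [hACdef]
    apply Finset.union_subset
    · exact hC.trans (Finset.Icc_subset_Icc_right (by omega))
    · exact Finset.Icc_subset_Icc (by omega) (by omega)
  have hsmT : η * AD.card + 1 ≤ m' := by rw [hADcard]; omega
  have hsmS : δ * AC.card + 1 ≤ m'' := by rw [hACcard]; omega
  have hNvalT : m' + 1 = η * (AD.card + 1) := by rw [hADcard]; omega
  have hNvalS : m'' + 1 = δ * (AC.card + 1) := by rw [hACcard]; omega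
  have hnm' : n < m' := by omega
  have hnm'' : n < m'' := by omega
  -- restriction of the augmented sets to [1,n]
  have hswapD : ∀ z1 z2 : ℕ, z2 ≤ n → AD ∩ Finset.Icc z1 z2 = D ∩ Finset.Icc z1 z2 := by
    intro z1 z2 hz2
    rw [hADdef]
    ext a
    simp only [Finset.mem_inter, Finset.mem_union, Finset.mem_Icc]
    constructor
    · rintro ⟨h1 | h1, h2⟩
      · exact ⟨h1, h2⟩
      · omega
    · rintro ⟨h1, h2⟩
      exact ⟨Or.inl h1, h2⟩
  have hswapC : ∀ z1 z2 : ℕ, z2 ≤ n → AC ∩ Finset.Icc z1 z2 = C ∩ Finset.Icc z1 z2 := by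
    intro z1 z2 hz2
    rw [hACdef]
    ext a
    simp only [Finset.mem_inter, Finset.mem_union, Finset.mem_Icc]
    constructor
    · rintro ⟨h1 | h1, h2⟩
      · exact ⟨h1, h2⟩
      · omega
    · rintro ⟨h1, h2⟩
      exact ⟨Or.inl h1, h2⟩
  -- gap membership
  have hredgap : ∀ r ∈ C \ D, r ∈ T.gapsUnion m' := by
    intro r hr
    rw [Finset.mem_sdiff] at hr
    have h1 := hCF hr.1
    rw [Finset.mem_inter] at h1
    have h2 := h1.2
    rw [Finset.mem_Icc] at h2
    have h3 := h1.1
    rw [fdelta, Finset.mem_union] at h3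
    rcases h3 with h3 | h3
    · rw [hADdef, Finset.mem_union] at h3
      rcases h3 with h3 | h3
      · exact absurd h3 hr.2
      · rw [Finset.mem_Icc] at h3; omega
    · exact h3
  have hbluegap : ∀ x ∈ D \ C, x ∈ S.gapsUnion m'' := by
    intro x hx
    rw [Finset.mem_sdiff] at hx
    have h1 := hDF hx.1
    rw [Finset.mem_inter] at h1
    have h2 := h1.2
    rw [Finset.mem_Icc] at h2
    have h3 := h1.1
    rw [fdelta, Finset.mem_union] at h3
    rcases h3 with h3 | h3
    · rw [hACdef, Finset.mem_union] at h3
      rcases h3 with h3 | h3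
      · exact absurd h3 hx.2
      · rw [Finset.mem_Icc] at h3; omega
    · exact h3
  -- specialized certificates
  have hredn : ∀ r ∈ C \ D, 1 ≤ r ∧ r ≤ n := by
    intro r hr
    have := hC (Finset.mem_sdiff.mp hr).1
    rw [Finset.mem_Icc] at this
    exact this
  have hbluen : ∀ x ∈ D \ C, 1 ≤ x ∧ x ≤ n := by
    intro x hx
    have := hD (Finset.mem_sdiff.mp hx).1
    rw [Finset.mem_Icc] at this
    exact this
  have hcertL_red : ∀ r ∈ C \ D, ∀ z, z < r → η * (D ∩ Finset.Icc (z + 1) r).card + 1 + z ≤ r := by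
    intro r hr z hz
    have hrn := (hredn r hr).2
    have := certL_gen hnm' hADsub hsmT hT (hredgap r hr) hrn hz
    rwa [hswapD (z + 1) r hrn] at this
  have hcertR_red : ∀ r ∈ C \ D, ∀ z, r ≤ z → z ≤ n →
      z + 2 ≤ r + η * ((D ∩ Finset.Icc (r + 1) z).card + 1) := by
    intro r hr z hz1 hz2
    have hrn := (hredn r hr).2
    have := certR_gen hnm' hADsub hsmT hNvalT hT (hredgap r hr) hrn hz1 hz2
    rwa [hswapD (r + 1) z hz2] at this
  have hcertL_blue : ∀ x ∈ D \ C, ∀ z, z < x →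
      δ * (C ∩ Finset.Icc (z + 1) x).card + 1 + z ≤ x := by
    intro x hx z hz
    have hxn := (hbluen x hx).2
    have := certL_gen hnm'' hACsub hsmS hS (hbluegap x hx) hxn hz
    rwa [hswapC (z + 1) x hxn] at this
  have hcertR_blue : ∀ x ∈ D \ C, ∀ z, x ≤ z → z ≤ n →
      z + 2 ≤ x + δ * ((C ∩ Finset.Icc (x + 1) z).card + 1) := by
    intro x hx z hz1 hz2
    have hxn := (hbluen x hx).2
    have := certR_gen hnm'' hACsub hsmS hNvalS hS (hbluegap x hx) hxn hz1 hz2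
    rwa [hswapC (x + 1) z hz2] at this
  -- nonemptiness
  have hCdne : (C \ D).Nonempty := by
    obtain ⟨a, ha, hna⟩ := Finset.not_subset.mp hnCD
    exact ⟨a, Finset.mem_sdiff.mpr ⟨ha, hna⟩⟩
  have hDcne : (D \ C).Nonempty := by
    by_contra hcon
    rw [Finset.not_nonempty_iff_eq_empty, Finset.sdiff_eq_empty_iff_subset] at hcon
    have heq := Finset.eq_of_subset_of_card_le hcon (by rw [hCcard, hDcard]; omega)
    exact hnCD (by rw [heq])
  set c := (C \ D).max' hCdne with hcdef
  have hcmem : c ∈ C \ D := (C \ D).max'_mem hCdne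
  have hcn := hredn c hcmem
  set xm := (D \ C).max' hDcne with hxmdef
  have hxmmem : xm ∈ D \ C := (D \ C).max'_mem hDcne
  have hcxm : c ≠ xm := by
    intro h
    rw [Finset.mem_sdiff] at hcmem hxmmem
    rw [h] at hcmem
    exact hxmmem.2 hcmem.1
  rcases Nat.lt_or_ge c xm with hcase | hcase
  · -- CASE B : some D \ C point above c
    set F := (D \ C).filter (fun v => c < v) with hFdef
    have hFne : F.Nonempty := ⟨xm, by rw [hFdef, Finset.mem_filter]; exact ⟨hxmmem, hcase⟩⟩
    set x' := F.min' hFne with hx'def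
    have hx'mem : x' ∈ F := F.min'_mem hFne
    rw [hFdef, Finset.mem_filter] at hx'mem
    obtain ⟨hx'Dc, hx'c⟩ := hx'mem
    have hx'min : ∀ v ∈ D \ C, c < v → x' ≤ v := by
      intro v hv hcv
      exact F.min'_le v (by rw [hFdef, Finset.mem_filter]; exact ⟨hv, hcv⟩)
    have hx'n := hbluen x' hx'Dc
    have hsub : D ∩ Finset.Icc (c + 1) (x' - 1) ⊆ C ∩ Finset.Icc (c + 1) (x' - 1) := by
      intro a ha
      rw [Finset.mem_inter, Finset.mem_Icc] at ha ⊢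
      refine ⟨?_, ha.2⟩
      by_contra hna
      have haDc : a ∈ D \ C := Finset.mem_sdiff.mpr ⟨ha.1, hna⟩
      have := hx'min a haDc (by omega)
      omega
    have hR := hcertR_red c hcmem (x' - 1) (by omega) (by omega)
    have hL := hcertL_blue x' hx'Dc (c - 1) (by omega)
    have hce : c - 1 + 1 = c := by omega
    rw [hce] at hL
    have hcnt : (D ∩ Finset.Icc (c + 1) (x' - 1)).card + 1 ≤ (C ∩ Finset.Icc c x').card := by
      have hins : insert c (D ∩ Finset.Icc (c + 1) (x' - 1)) ⊆ C ∩ Finset.Icc c x' := by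
        apply Finset.insert_subset
        · rw [Finset.mem_inter, Finset.mem_Icc]
          exact ⟨(Finset.mem_sdiff.mp hcmem).1, le_rfl, by omega⟩
        · refine (hsub.trans ?_)
          intro a ha
          rw [Finset.mem_inter, Finset.mem_Icc] at ha ⊢
          exact ⟨ha.1, by omega, by omega⟩
      have := Finset.card_le_card hins
      rwa [Finset.card_insert_of_notMem (by
        intro hcc
        rw [Finset.mem_inter, Finset.mem_Icc] at hcc
        omega)] at this
    -- arithmetic contradiction
    set jD := (D ∩ Finset.Icc (c + 1) (x' - 1)).card with hjD
    set cc := (C ∩ Finset.Icc c x').card with hcc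
    have e1 : η * (jD + 1) ≤ δ * (jD + 1) := Nat.mul_le_mul_right (jD + 1) hηδ
    have e2 : δ * (jD + 1) ≤ δ * cc := Nat.mul_le_mul_left δ hcnt
    omega
  · -- CASE A : all D \ C points below c
    have hcasex : xm < c := by omega
    set x1 := (D \ C).min' hDcne with hx1def
    have hx1mem : x1 ∈ D \ C := (D \ C).min'_mem hDcne
    have hx1n := hbluen x1 hx1mem
    have hx1xm : x1 ≤ xm := Finset.min'_le _ _ hxmmem
    have hx1c : x1 < c := by omega
    have hx1Cd : x1 ∉ C \ D := by
      intro h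
      rw [Finset.mem_sdiff] at h hx1mem
      exact hx1mem.2 h.1
    have hchain := chainA (η := η) (x1 := x1) (D := D) (Cd := C \ D) (by omega) hx1Cd
      hcertL_red c hcmem hx1c
    have hRB := hcertR_blue x1 hx1mem (c - 1) (by omega) (by omega)
    -- counting identities
    have hDct : D ∩ Finset.Icc x1 c
        = (D \ C) ∪ ((C ∩ D) ∩ Finset.Icc (x1 + 1) (c - 1)) := by
      ext a
      constructor
      · intro ha
        rw [Finset.mem_inter, Finset.mem_Icc] at ha
        rw [Finset.mem_union]
        by_cases haC : a ∈ C
        · right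
          rw [Finset.mem_inter, Finset.mem_inter, Finset.mem_Icc]
          have hax1 : a ≠ x1 := by
            intro h
            rw [Finset.mem_sdiff] at hx1mem
            rw [h] at haC
            exact hx1mem.2 haC
          have hac : a ≠ c := by
            intro h
            rw [Finset.mem_sdiff] at hcmem
            rw [h] at ha
            exact hcmem.2 ha.1
          exact ⟨⟨haC, ha.1⟩, by omega, by omega⟩
        · exact Or.inl (Finset.mem_sdiff.mpr ⟨ha.1, haC⟩)
      · intro ha
        rw [Finset.mem_union] at ha
        rw [Finset.mem_inter, Finset.mem_Icc]
        rcases ha with ha | ha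
        · have h1 : x1 ≤ a := Finset.min'_le _ _ ha
          have h2 : a ≤ xm := Finset.le_max' _ _ ha
          exact ⟨(Finset.mem_sdiff.mp ha).1, h1, by omega⟩
        · rw [Finset.mem_inter, Finset.mem_inter, Finset.mem_Icc] at ha
          exact ⟨ha.1.2, by omega, by omega⟩
    have hDctdisj : Disjoint (D \ C) ((C ∩ D) ∩ Finset.Icc (x1 + 1) (c - 1)) := by
      rw [Finset.disjoint_left]
      intro a ha hb
      rw [Finset.mem_sdiff] at ha
      rw [Finset.mem_inter, Finset.mem_inter] at hb
      exact ha.2 hb.1.1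
    have hDcard2 : (D ∩ Finset.Icc x1 c).card
        = (D \ C).card + ((C ∩ D) ∩ Finset.Icc (x1 + 1) (c - 1)).card := by
      rw [hDct, Finset.card_union_of_disjoint hDctdisj]
    have hCdct : (C \ D) ∩ Finset.Icc x1 c
        = insert c ((C \ D) ∩ Finset.Icc (x1 + 1) (c - 1)) := by
      ext a
      simp only [Finset.mem_insert, Finset.mem_inter, Finset.mem_Icc]
      constructor
      · rintro ⟨h1, h2, h3⟩
        rcases Nat.eq_or_lt_of_le h3 with h | h
        · exact Or.inl h
        · right
          have hax1 : a ≠ x1 := by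
            intro hh
            rw [hh] at h1
            exact hx1Cd h1
          exact ⟨h1, by omega, by omega⟩
      · rintro (rfl | ⟨h1, h2, h3⟩)
        · exact ⟨hcmem, by omega, le_rfl⟩
        · exact ⟨h1, by omega, by omega⟩
    have hCdcard2 : ((C \ D) ∩ Finset.Icc x1 c).card
        = ((C \ D) ∩ Finset.Icc (x1 + 1) (c - 1)).card + 1 := by
      rw [hCdct, Finset.card_insert_of_notMem (by
        intro hcc
        rw [Finset.mem_inter, Finset.mem_Icc] at hcc
        omega)]
    have hCio : (C ∩ Finset.Icc (x1 + 1) (c - 1)).card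
        = ((C \ D) ∩ Finset.Icc (x1 + 1) (c - 1)).card
          + ((C ∩ D) ∩ Finset.Icc (x1 + 1) (c - 1)).card := by
      rw [← Finset.card_union_of_disjoint (by
        rw [Finset.disjoint_left]
        intro a ha hb
        rw [Finset.mem_inter, Finset.mem_sdiff] at ha
        rw [Finset.mem_inter, Finset.mem_inter] at hb
        exact ha.1.2 hb.1.2)]
      congr 1
      ext a
      simp only [Finset.mem_inter, Finset.mem_union, Finset.mem_sdiff]
      constructor
      · rintro ⟨h1, h2⟩
        by_cases haD : a ∈ D
        · exact Or.inr ⟨⟨h1, haD⟩, h2⟩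
        · exact Or.inl ⟨⟨h1, haD⟩, h2⟩
      · rintro (⟨⟨h1, _⟩, h2⟩ | ⟨⟨h1, _⟩, h2⟩) <;> exact ⟨h1, h2⟩
    have hj2CM : ((C ∩ D) ∩ Finset.Icc (x1 + 1) (c - 1)).card ≤ (C ∩ D).card :=
      Finset.card_le_card Finset.inter_subset_left
    have hg2g : ((C \ D) ∩ Finset.Icc (x1 + 1) (c - 1)).card + 1 ≤ (C \ D).card := by
      rw [← hCdcard2]
      exact Finset.card_le_card Finset.inter_subset_left
    have hsC : (C ∩ D).card + (C \ D).card = C.card := Finset.card_inter_add_card_sdiff C D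
    have htD : (C ∩ D).card + (D \ C).card = D.card := by
      rw [Finset.inter_comm]
      exact Finset.card_inter_add_card_sdiff D C
    -- final arithmetic
    set mm := (D \ C).card with hmm
    set gg := (C \ D).card with hgg
    set CM := (C ∩ D).card with hCM
    set j2 := ((C ∩ D) ∩ Finset.Icc (x1 + 1) (c - 1)).card with hj2
    set g2 := ((C \ D) ∩ Finset.Icc (x1 + 1) (c - 1)).card with hg2
    rw [hDcard2, hCdcard2] at hchain
    rw [hCio] at hRB
    have hcompc : (CM + gg + 1) * δ ≤ (CM + mm + 1) * η := by
      have h1 : d + q = CM + gg := by omega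
      have h2 : d + l = CM + mm := by omega
      rw [← h1, ← h2]
      exact hcomp
    -- pass to integers
    have hchainZ : (η : ℤ) * (mm + j2) + (g2 + 1) + x1 ≤ c + 1 := by
      have : (η : ℤ) * ((mm : ℤ) + j2) = ((η * (mm + j2) : ℕ) : ℤ) := by push_cast; ring
      rw [this]
      exact_mod_cast hchain
    have hRBZ : (c : ℤ) + 1 ≤ x1 + δ * (g2 + j2 + 1) := by
      have h1 : (c : ℤ) - 1 + 2 ≤ x1 + δ * ((g2 + j2 : ℕ) + 1) := by
        have := hRB
        have hc1 : ((c - 1 : ℕ) : ℤ) = (c : ℤ) - 1 := by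
          have : 1 ≤ c := hcn.1
          omega
        calc (c : ℤ) - 1 + 2 = ((c - 1 : ℕ) : ℤ) + 2 := by rw [hc1]
          _ ≤ _ := by exact_mod_cast this
      push_cast at h1 ⊢
      linarith
    have hcompZ : ((CM : ℤ) + gg + 1) * δ ≤ ((CM : ℤ) + mm + 1) * η := by exact_mod_cast hcompc
    have hp1 : (0 : ℤ) ≤ ((δ : ℤ) - η) * ((CM : ℤ) - j2) := by
      apply mul_nonneg
      · have : (η : ℤ) ≤ δ := by exact_mod_cast hηδ
        linarith
      · have : (j2 : ℤ) ≤ CM := by exact_mod_cast hj2CM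
        linarith
    have hp2 : (0 : ℤ) ≤ (δ : ℤ) * ((gg : ℤ) - g2 - 1) := by
      apply mul_nonneg
      · positivity
      · have : (g2 : ℤ) + 1 ≤ gg := by exact_mod_cast hg2g
        linarith
    have hη2Z : (2 : ℤ) ≤ η := by exact_mod_cast hη2
    have hηδZ : (η : ℤ) ≤ δ := by exact_mod_cast hηδ
    have ex1 : (η : ℤ) * ((mm : ℤ) + j2) = (η : ℤ) * mm + (η : ℤ) * j2 := by ring
    have ex2 : (δ : ℤ) * ((g2 : ℤ) + j2 + 1) = (δ : ℤ) * g2 + (δ : ℤ) * j2 + δ := by ring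
    have ex3 : ((CM : ℤ) + gg + 1) * δ = (δ : ℤ) * CM + (δ : ℤ) * gg + δ := by ring
    have ex4 : ((CM : ℤ) + mm + 1) * η = (η : ℤ) * CM + (η : ℤ) * mm + η := by ring
    have ex5 : ((δ : ℤ) - η) * ((CM : ℤ) - j2)
        = (δ : ℤ) * CM + (η : ℤ) * j2 - (η : ℤ) * CM - (δ : ℤ) * j2 := by ring
    have ex6 : (δ : ℤ) * ((gg : ℤ) - g2 - 1) = (δ : ℤ) * gg - (δ : ℤ) * g2 - δ := by ring
    rw [ex1] at hchainZ
    rw [ex2] at hRBZ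
    rw [ex3, ex4] at hcompZ
    rw [ex5] at hp1
    rw [ex6] at hp2
    linarith [hchainZ, hRBZ, hcompZ, hp1, hp2]
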